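/- arXiv:1307.0827 — 3 statements merged into one kernel-verified Lean document; each statement's English description precedes it below -/
import Mathlib

section
/- (Proposition 2.) Let n = 2 and ψ = (b₁ + b₂)/√2. For every p ∈ [2/3, 1] and every effect E on ℂ², the reliability satisfies R_ψ(E) ≤ p; that is, no experiment can retrodict whether a collapse has occurred with greater reliability than blind guessing. -/
open scoped InnerProductSpace
open MeasureTheory Finset

noncomputable section

abbrev Vn (n : ℕ) : Type := EuclideanSpace ℂ (Fin n)

/-- The standard orthonormal basis vector `b_k` of `ℂ^n`. -/
def basisVec (n : ℕ) (k : Fin n) : Vn n := EuclideanSpace.single k 1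

/-- The rank-one operator `|w⟩⟨v|`, i.e. `x ↦ ⟪v, x⟫ • w`. -/
def rankOne {n : ℕ} (v w : Vn n) : Vn n →L[ℂ] Vn n :=
  (innerSL ℂ v).smulRight w

/-- The diagonal part `diag E = ∑ₖ ⟪bₖ, E bₖ⟫ |bₖ⟩⟨bₖ|` of an operator `E`
in the standard basis. -/
def diagOp {n : ℕ} (E : Vn n →L[ℂ] Vn n) : Vn n →L[ℂ] Vn n :=
  ∑ k : Fin n, ⟪basisVec n k, E (basisVec n k)⟫_ℂ • rankOne (basisVec n k) (basisVec n k)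

/-- An effect: an operator `E` with `0 ≤ E ≤ I`
(both `E` and `I - E` positive semidefinite). -/
def IsEffect {n : ℕ} (E : Vn n →L[ℂ] Vn n) : Prop :=
  E.IsPositive ∧ (1 - E).IsPositive

/-- The reliability `R_ψ(E) = p⟪ψ, (diag E)ψ⟫ + (1-p)⟪ψ, (I-E)ψ⟫` of the yes–no
experiment with effect `E` for detecting a collapse (of probability `p`) onto the
standard basis, given initial wave function `ψ`. -/
def reliability {n : ℕ} (p : ℝ) (E : Vn n →L[ℂ] Vn n) (ψ : Vn n) : ℝ :=
  p * (⟪ψ, diagOp E ψ⟫_ℂ).re + (1 - p) * (⟪ψ, (1 - E) ψ⟫_ℂ).re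

/-!
With `φ = (b₁ - b₂)/√2`, the vectors `ψ, φ` form another orthonormal basis of `ℂ²`, so
`⟪ψ, (diag E) ψ⟫ = (E₁₁ + E₂₂)/2 = (x + y)/2` for `x = ⟪ψ, E ψ⟫` and `y = ⟪φ, E φ⟫`.
Hence `R_ψ(E) = p (x + y)/2 + (1 - p)(1 - x)`, and `E ≤ I` gives `x, y ≤ 1`, so that
`p - R_ψ(E) = (3p/2 - 1)(1 - x) + (p/2)(1 - y) ≥ 0` as soon as `p ≥ 2/3`.
-/

theorem inner_add_map_add_add_inner_sub_map_sub {𝕜 F : Type*} [RCLike 𝕜] [NormedAddCommGroup F]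
    [InnerProductSpace 𝕜 F] (T : F →ₗ[𝕜] F) (x y : F) :
    ⟪x + y, T (x + y)⟫_𝕜 + ⟪x - y, T (x - y)⟫_𝕜 = 2 * (⟪x, T x⟫_𝕜 + ⟪y, T y⟫_𝕜) := by
  simp only [map_add, map_sub, inner_add_left, inner_add_right, inner_sub_left, inner_sub_right]
  ring

section

variable {𝕜 F : Type*} [RCLike 𝕜] [NormedAddCommGroup F] [InnerProductSpace 𝕜 F]

theorem re_inner_one_sub_apply_self (T : F →L[𝕜] F) (x : F) :
    RCLike.re ⟪x, (1 - T) x⟫_𝕜 = ‖x‖ ^ 2 - RCLike.re ⟪x, T x⟫_𝕜 := by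
  rw [sub_apply, one_apply_eq_self, inner_sub_right, map_sub, inner_self_eq_norm_sq]

theorem ContinuousLinearMap.IsPositive.re_inner_apply_self_le_norm_sq {T : F →L[𝕜] F}
    (hT : (1 - T).IsPositive) (x : F) : RCLike.re ⟪x, T x⟫_𝕜 ≤ ‖x‖ ^ 2 := by
  have := hT.re_inner_nonneg_right x
  rw [re_inner_one_sub_apply_self] at this
  linarith

end

theorem inner_diagOp_self {n : ℕ} (E : Vn n →L[ℂ] Vn n) (ψ : Vn n) :
    ⟪ψ, diagOp E ψ⟫_ℂ = ∑ k, (‖ψ k‖ ^ 2 : ℂ) * ⟪basisVec n k, E (basisVec n k)⟫_ℂ := by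
  simp only [diagOp, rankOne, FunLike.coe_sum, Finset.sum_apply, FunLike.coe_smul, Pi.smul_apply,
    ContinuousLinearMap.smulRight_apply, innerSL_apply_apply, inner_sum, inner_smul_right,
    basisVec, EuclideanSpace.inner_single_left, EuclideanSpace.inner_single_right]
  refine Finset.sum_congr rfl fun k _ => ?_
  rw [← Complex.mul_conj']
  simp
  ring

theorem two_mul_inner_diagOp_self {n : ℕ} (E : Vn n →L[ℂ] Vn n) {i j : Fin n} (hij : i ≠ j)
    (c : ℂ) :
    2 * ⟪c • (basisVec n i + basisVec n j), diagOp E (c • (basisVec n i + basisVec n j))⟫_ℂ =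
      ⟪c • (basisVec n i + basisVec n j), E (c • (basisVec n i + basisVec n j))⟫_ℂ +
      ⟪c • (basisVec n i - basisVec n j), E (c • (basisVec n i - basisVec n j))⟫_ℂ := by
  rw [inner_diagOp_self, Fintype.sum_eq_add i j hij]
  · simp only [map_smul, inner_smul_left, inner_smul_right, ← mul_add,
      ← ContinuousLinearMap.coe_coe E, inner_add_map_add_add_inner_sub_map_sub]
    simp [basisVec, hij, hij.symm, ← Complex.mul_conj']
    ring
  · rintro k ⟨hki, hkj⟩
    simp [basisVec, hki, hkj]

theorem norm_basisVec_add_basisVec_sq {n : ℕ} {i j : Fin n} (hij : i ≠ j) :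
    ‖basisVec n i + basisVec n j‖ ^ 2 = 2 := by
  rw [@norm_add_sq ℂ]
  simp [basisVec, EuclideanSpace.inner_single_left, hij]
  norm_num

theorem norm_basisVec_sub_basisVec_sq {n : ℕ} {i j : Fin n} (hij : i ≠ j) :
    ‖basisVec n i - basisVec n j‖ ^ 2 = 2 := by
  rw [@norm_sub_sq ℂ]
  simp [basisVec, EuclideanSpace.inner_single_left, hij]
  norm_num

/-- (Proposition 2.) For `n = 2`, `ψ = (b₁ + b₂)/√2`, every `p ∈ [2/3, 1]` and every
effect `E` on `ℂ²`, the reliability satisfies `R_ψ(E) ≤ p`: no experiment can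
retrodict whether a collapse occurred with greater reliability than blind guessing. -/
theorem stmt_3 (p : ℝ) (hp : p ∈ Set.Icc (2 / 3 : ℝ) 1)
    (E : Vn 2 →L[ℂ] Vn 2) (hE : IsEffect E) :
    reliability p E (((Real.sqrt 2 : ℝ) : ℂ)⁻¹ • (basisVec 2 0 + basisVec 2 1)) ≤ p := by
  set c : ℂ := ((Real.sqrt 2 : ℝ) : ℂ)⁻¹
  set ψ := c • (basisVec 2 0 + basisVec 2 1)
  set φ := c • (basisVec 2 0 - basisVec 2 1)
  have hc : ‖c‖ ^ 2 = 1 / 2 := by simp [c]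
  have hψ : ‖ψ‖ ^ 2 = 1 := by
    rw [norm_smul, mul_pow, hc, norm_basisVec_add_basisVec_sq (by decide)]; norm_num
  have hφ : ‖φ‖ ^ 2 = 1 := by
    rw [norm_smul, mul_pow, hc, norm_basisVec_sub_basisVec_sq (by decide)]; norm_num
  have hdiag : (⟪ψ, diagOp E ψ⟫_ℂ).re = ((⟪ψ, E ψ⟫_ℂ).re + (⟪φ, E φ⟫_ℂ).re) / 2 := by
    have := congrArg Complex.re (two_mul_inner_diagOp_self E (by decide : (0 : Fin 2) ≠ 1) c)
    simp only [Complex.mul_re, Complex.add_re, Complex.re_ofNat, Complex.im_ofNat, zero_mul,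
      sub_zero] at this
    linarith
  have hnot : (⟪ψ, (1 - E) ψ⟫_ℂ).re = 1 - (⟪ψ, E ψ⟫_ℂ).re := by
    rw [← RCLike.re_to_complex, re_inner_one_sub_apply_self, hψ]; rfl
  have hx : (⟪ψ, E ψ⟫_ℂ).re ≤ 1 := hψ ▸ hE.2.re_inner_apply_self_le_norm_sq ψ
  have hy : (⟪φ, E φ⟫_ℂ).re ≤ 1 := hφ ▸ hE.2.re_inner_apply_self_le_norm_sq φ
  rw [reliability, hdiag, hnot]
  nlinarith [mul_nonneg (by linarith [hp.1] : (0 : ℝ) ≤ 3 * p - 2) (sub_nonneg.2 hx),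
    mul_nonneg (by linarith [hp.1] : (0 : ℝ) ≤ p) (sub_nonneg.2 hy)]
end
end

section
/- (Proposition 4.) Let ρ = (1/n)·I on ℂ^n, let p ∈ [0,1], and let E be any positive semidefinite operator on ℂ^n with tr E ≠ 0 (an outcome effect of an arbitrary experiment). Then the posterior probability that a collapse occurred, given that outcome, equals the prior: p·tr(ρ·diag E) / ( (1−p)·tr(ρ·E) + p·tr(ρ·diag E) ) = p. Hence, for a uniformly distributed initial wave function, no experiment conveys any information about whether a collapse has occurred. -/
open scoped InnerProductSpace
open MeasureTheory Finset

noncomputable section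

/-! Since `ρ` is a multiple of the identity, `tr(ρ·diag E) = tr(ρ·E)` because taking the diagonal
part preserves the trace; the posterior `p·t / ((1-p)·t + p·t)` is then `p`. -/

lemma inner_basisVec {n : ℕ} (k j : Fin n) :
    ⟪basisVec n k, basisVec n j⟫_ℂ = if k = j then 1 else 0 := by
  simp [basisVec, EuclideanSpace.inner_single_left]

lemma trace_eq_sum_inner_basisVec {n : ℕ} (T : Vn n →L[ℂ] Vn n) :
    LinearMap.trace ℂ (Vn n) ↑T = ∑ k : Fin n, ⟪basisVec n k, T (basisVec n k)⟫_ℂ := by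
  rw [LinearMap.trace_eq_matrix_trace ℂ (PiLp.basisFun 2 ℂ (Fin n))]
  refine Finset.sum_congr rfl fun k _ => ?_
  simp [basisVec, LinearMap.toMatrix_apply, EuclideanSpace.inner_single_left]

lemma trace_diagOp {n : ℕ} (E : Vn n →L[ℂ] Vn n) :
    LinearMap.trace ℂ (Vn n) ↑(diagOp E) = LinearMap.trace ℂ (Vn n) ↑E := by
  simp_rw [trace_eq_sum_inner_basisVec, diagOp, _root_.sum_apply,
    smul_apply, rankOne, ContinuousLinearMap.smulRight_apply,
    innerSL_apply_apply, inner_sum, inner_smul_right, inner_basisVec]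
  simp

lemma ContinuousLinearMap.trace_smul_one_comp {R M : Type*} [CommRing R] [TopologicalSpace M]
    [AddCommGroup M] [Module R M] [ContinuousConstSMul R M] (c : R) (T : M →L[R] M) :
    LinearMap.trace R M ↑((c • (1 : M →L[R] M)) ∘L T) = c * LinearMap.trace R M ↑T := by
  rw [ContinuousLinearMap.smul_comp, ContinuousLinearMap.one_def, ContinuousLinearMap.id_comp,
    ContinuousLinearMap.toLinearMap_smul, map_smul, smul_eq_mul]

theorem stmt_10_general (n : ℕ) (p : ℝ)
    (E : Vn n →L[ℂ] Vn n)
    (htr : LinearMap.trace ℂ (Vn n) ↑E ≠ 0) :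
    (p : ℂ) * LinearMap.trace ℂ (Vn n) ↑(((n : ℂ)⁻¹ • (1 : Vn n →L[ℂ] Vn n)) ∘L diagOp E) /
      (((1 - p : ℝ) : ℂ) *
          LinearMap.trace ℂ (Vn n) ↑(((n : ℂ)⁻¹ • (1 : Vn n →L[ℂ] Vn n)) ∘L E)
        + (p : ℂ) *
          LinearMap.trace ℂ (Vn n) ↑(((n : ℂ)⁻¹ • (1 : Vn n →L[ℂ] Vn n)) ∘L diagOp E))
      = (p : ℂ) := by
  simp only [ContinuousLinearMap.trace_smul_one_comp, trace_diagOp]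
  have hn : (n : ℂ) ≠ 0 := by
    rintro hn
    obtain rfl : n = 0 := by exact_mod_cast hn
    exact htr (by simp [trace_eq_sum_inner_basisVec])
  have hx : (n : ℂ)⁻¹ * LinearMap.trace ℂ (Vn n) ↑E ≠ 0 := mul_ne_zero (inv_ne_zero hn) htr
  rw [Complex.ofReal_sub, Complex.ofReal_one, ← add_mul, sub_add_cancel, one_mul,
    mul_div_cancel_right₀ _ hx]

/-- (Proposition 4.) For `ρ = (1/n)·I` on `ℂⁿ` (the density matrix of the uniform
distribution on the unit sphere), `p ∈ [0,1]`, and any positive semidefinite outcome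
effect `E` with `tr E ≠ 0`, the posterior probability of a collapse given the outcome
equals the prior: `p·tr(ρ·diag E) / ((1-p)·tr(ρ·E) + p·tr(ρ·diag E)) = p`. Hence no
experiment conveys any information about whether a collapse occurred. -/
theorem stmt_10 (n : ℕ) (hn : 1 ≤ n) (p : ℝ) (hp : p ∈ Set.Icc (0 : ℝ) 1)
    (E : Vn n →L[ℂ] Vn n) (hE : E.IsPositive)
    (htr : LinearMap.trace ℂ (Vn n) ↑E ≠ 0) :
    (p : ℂ) * LinearMap.trace ℂ (Vn n) ↑(((n : ℂ)⁻¹ • (1 : Vn n →L[ℂ] Vn n)) ∘L diagOp E) /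
      (((1 - p : ℝ) : ℂ) *
          LinearMap.trace ℂ (Vn n) ↑(((n : ℂ)⁻¹ • (1 : Vn n →L[ℂ] Vn n)) ∘L E)
        + (p : ℂ) *
          LinearMap.trace ℂ (Vn n) ↑(((n : ℂ)⁻¹ • (1 : Vn n →L[ℂ] Vn n)) ∘L diagOp E))
      = (p : ℂ) :=
  stmt_10_general n p E htr
end
end

section
/- (Proposition 7.) Let n = 2, let u be the uniform probability measure on the unit sphere of ℂ², and let p ∈ [0,1] be arbitrary. Then for every effect E on ℂ², the set S_E = { ψ ∈ S(ℂ²) : R_ψ(E) > max{p, 1−p} } satisfies u(S_E) ≤ 1/2. -/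
open scoped InnerProductSpace
open MeasureTheory Finset

noncomputable section

/-- The map induced on the unit sphere of `ℂⁿ` by a unitary (linear isometric)
transformation `U`. -/
def sphereMap {n : ℕ} (U : Vn n ≃ₗᵢ[ℂ] Vn n)
    (ψ : Metric.sphere (0 : Vn n) 1) : Metric.sphere (0 : Vn n) 1 :=
  ⟨U ψ, by
    rw [mem_sphere_zero_iff_norm, U.norm_map]
    exact mem_sphere_zero_iff_norm.mp ψ.2⟩

/-!
Write `E = [[e₀, c], [c̄, e₁]]` in the standard basis and pick `|λ| = 1` with `λ c = -c̄`.
The unitary `U (a, b) = (b, λ a)` satisfies `U* E U + E = (e₀ + e₁) I`, and the same holds for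
`diag E`; hence for every unit vector `ψ`,
`R_{Uψ}(E) + R_ψ(E) = p t + (1 - p)(2 - t) ≤ 2 max{p, 1 - p}` with `t = e₀ + e₁ ∈ [0, 2]`.
So `S_E` and `U⁻¹ S_E` are disjoint, and by unitary invariance of `u` they have the same measure.
-/

section Coordinates

variable {n : ℕ}

lemma sum_smul_basisVec (x : Vn n) : ∑ i, x i • basisVec n i = x := by
  simpa [basisVec] using (EuclideanSpace.basisFun (Fin n) ℂ).sum_repr x

lemma inner_map_eq_sum (T : Vn n →L[ℂ] Vn n) (x y : Vn n) :
    ⟪x, T y⟫_ℂ =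
      ∑ i, ∑ j, starRingEnd ℂ (x i) * y j * ⟪basisVec n i, T (basisVec n j)⟫_ℂ := by
  conv_lhs => rw [← sum_smul_basisVec x, ← sum_smul_basisVec y]
  simp only [map_sum, _root_.map_smul, sum_inner, inner_sum, inner_smul_left,
    inner_smul_right, Finset.mul_sum]
  rw [Finset.sum_comm]
  refine Finset.sum_congr rfl fun i _ => Finset.sum_congr rfl fun j _ => ?_
  ring

lemma inner_self_eq_sum (x : Vn n) : ⟪x, x⟫_ℂ = ∑ i, starRingEnd ℂ (x i) * x i := by
  simp only [PiLp.inner_apply, RCLike.inner_apply, mul_comm]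

lemma inner_diagOp_basisVec (E : Vn n →L[ℂ] Vn n) (i j : Fin n) :
    ⟪basisVec n i, diagOp E (basisVec n j)⟫_ℂ =
      if i = j then ⟪basisVec n i, E (basisVec n i)⟫_ℂ else 0 := by
  rcases eq_or_ne i j with rfl | h <;>
    simp [diagOp, rankOne, basisVec, EuclideanSpace.inner_single_left, *]

end Coordinates

def swapPhase (l : ℂ) (hl : ‖l‖ = 1) : Vn 2 ≃ₗᵢ[ℂ] Vn 2 :=
  LinearIsometry.toLinearIsometryEquiv
    { toFun := fun x => WithLp.toLp 2 ![x 1, l * x 0]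
      map_add' := fun x y => by ext i; fin_cases i <;> simp [mul_add]
      map_smul' := fun c x => by ext i; fin_cases i <;> simp [mul_left_comm]
      norm_map' := fun x => by
        simp [EuclideanSpace.norm_eq, Fin.sum_univ_two, hl, add_comm] } rfl

section SwapPhase

variable {l : ℂ} (hl : ‖l‖ = 1) (x : Vn 2)

@[simp] lemma swapPhase_apply_zero : swapPhase l hl x 0 = x 1 := rfl

@[simp] lemma swapPhase_apply_one : swapPhase l hl x 1 = l * x 0 := rfl

lemma inner_swapPhase_add_inner (T : Vn 2 →L[ℂ] Vn 2)
    (hT : ⟪basisVec 2 1, T (basisVec 2 0)⟫_ℂ = starRingEnd ℂ ⟪basisVec 2 0, T (basisVec 2 1)⟫_ℂ)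
    (hlT : l * ⟪basisVec 2 0, T (basisVec 2 1)⟫_ℂ =
      -starRingEnd ℂ ⟪basisVec 2 0, T (basisVec 2 1)⟫_ℂ) :
    ⟪swapPhase l hl x, T (swapPhase l hl x)⟫_ℂ + ⟪x, T x⟫_ℂ =
      (⟪basisVec 2 0, T (basisVec 2 0)⟫_ℂ + ⟪basisVec 2 1, T (basisVec 2 1)⟫_ℂ) * ⟪x, x⟫_ℂ := by
  have hl' : starRingEnd ℂ l * l = 1 := by simp [Complex.conj_mul', hl]
  have hlT' := congrArg (starRingEnd ℂ) hlT
  simp only [map_mul, map_neg, Complex.conj_conj] at hlT'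
  rw [inner_map_eq_sum, inner_map_eq_sum, inner_self_eq_sum]
  simp only [Fin.sum_univ_two, swapPhase_apply_zero, swapPhase_apply_one, map_mul, hT]
  linear_combination (starRingEnd ℂ (x 1) * x 0) * hlT + (starRingEnd ℂ (x 0) * x 1) * hlT'
    + (starRingEnd ℂ (x 0) * x 0 * ⟪basisVec 2 1, T (basisVec 2 1)⟫_ℂ) * hl'

end SwapPhase

lemma exists_norm_eq_one_mul_eq_neg_conj (c : ℂ) :
    ∃ l : ℂ, ‖l‖ = 1 ∧ l * c = -starRingEnd ℂ c := by
  rcases eq_or_ne c 0 with rfl | hc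
  · exact ⟨1, by simp, by simp⟩
  · refine ⟨-starRingEnd ℂ c / c, by simp [hc], by field_simp⟩

namespace IsEffect

variable {n : ℕ} {E : Vn n →L[ℂ] Vn n}

lemma inner_map_eq_conj (hE : IsEffect E) (x y : Vn n) :
    ⟪y, E x⟫_ℂ = starRingEnd ℂ ⟪x, E y⟫_ℂ := by
  rw [← inner_conj_symm]
  exact congrArg _ (hE.1.1 x y)

lemma re_inner_mem_Icc (hE : IsEffect E) {x : Vn n} (hx : ‖x‖ = 1) :
    (⟪x, E x⟫_ℂ).re ∈ Set.Icc 0 1 := by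
  have h := hE.2.re_inner_nonneg_right x
  simp only [sub_apply, one_apply_eq_self, inner_sub_right,
    map_sub, inner_self_eq_norm_sq, hx] at h
  exact ⟨hE.1.re_inner_nonneg_right x, by simpa using h⟩

end IsEffect

lemma reliability_of_norm_eq_one {n : ℕ} (p : ℝ) (E : Vn n →L[ℂ] Vn n) {x : Vn n}
    (hx : ‖x‖ = 1) :
    reliability p E x = p * (⟪x, diagOp E x⟫_ℂ).re + (1 - p) * (1 - (⟪x, E x⟫_ℂ).re) := by
  simp [reliability, inner_self_eq_norm_sq_to_K, hx]

lemma reliability_swapPhase_add_le (p : ℝ) {E : Vn 2 →L[ℂ] Vn 2} (hE : IsEffect E)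
    {l : ℂ} (hl : ‖l‖ = 1)
    (hlE : l * ⟪basisVec 2 0, E (basisVec 2 1)⟫_ℂ =
      -starRingEnd ℂ ⟪basisVec 2 0, E (basisVec 2 1)⟫_ℂ)
    {x : Vn 2} (hx : ‖x‖ = 1) :
    reliability p E (swapPhase l hl x) + reliability p E x ≤ 2 * max p (1 - p) := by
  have hdiag := inner_swapPhase_add_inner hl x (diagOp E)
    (by simp [inner_diagOp_basisVec]) (by simp [inner_diagOp_basisVec])
  have hquad := inner_swapPhase_add_inner hl x E (hE.inner_map_eq_conj _ _) hlE
  have hxx : ⟪x, x⟫_ℂ = 1 := by simp [inner_self_eq_norm_sq_to_K, hx]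
  simp only [inner_diagOp_basisVec, if_true, hxx, mul_one] at hdiag hquad
  have h0 := hE.re_inner_mem_Icc (x := basisVec 2 0) (by simp [basisVec])
  have h1 := hE.re_inner_mem_Icc (x := basisVec 2 1) (by simp [basisVec])
  set s := ((⟪basisVec 2 0, E (basisVec 2 0)⟫_ℂ).re + (⟪basisVec 2 1, E (basisVec 2 1)⟫_ℂ).re) / 2
    with hs
  have hs0 : 0 ≤ s := by simp only [s]; linarith [h0.1, h1.1]
  have hs1 : 0 ≤ 1 - s := by simp only [s]; linarith [h0.2, h1.2]
  rw [reliability_of_norm_eq_one p E ((swapPhase l hl).norm_map x ▸ hx),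
    reliability_of_norm_eq_one p E hx]
  calc _ = 2 * (s * p + (1 - s) * (1 - p)) := by
        have hdiag_re := congrArg Complex.re hdiag
        have hquad_re := congrArg Complex.re hquad
        simp only [Complex.add_re] at hdiag_re hquad_re
        linear_combination p * hdiag_re - (1 - p) * hquad_re + (4 * p - 2) * hs
    _ ≤ 2 * max p (1 - p) := by gcongr; exact Convex.combo_le_max p (1 - p) hs0 hs1 (by ring)

lemma continuous_reliability {n : ℕ} (p : ℝ) (E : Vn n →L[ℂ] Vn n) :
    Continuous (reliability p E) := by
  unfold reliability
  fun_prop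

lemma continuous_sphereMap {n : ℕ} (U : Vn n ≃ₗᵢ[ℂ] Vn n) : Continuous (sphereMap U) :=
  (U.continuous.comp continuous_subtype_val).subtype_mk _

lemma MeasureTheory.MeasurePreserving.measure_le_half_of_disjoint_preimage {X : Type*}
    [MeasurableSpace X] {μ : Measure X} [IsProbabilityMeasure μ] {f : X → X}
    (hf : MeasurePreserving f μ μ) {S : Set X} (hS : MeasurableSet S)
    (hdisj : Disjoint S (f ⁻¹' S)) : μ S ≤ 1 / 2 := by
  have h : μ S + μ S ≤ 1 :=
    calc μ S + μ S = μ S + μ (f ⁻¹' S) := by rw [hf.measure_preimage hS.nullMeasurableSet]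
      _ = μ (S ∪ f ⁻¹' S) := (measure_union hdisj (hf.measurable hS)).symm
      _ ≤ 1 := prob_le_one
  rwa [ENNReal.le_div_iff_mul_le (Or.inl two_ne_zero) (Or.inl ENNReal.ofNat_ne_top), mul_two]

theorem stmt_16_general
    [MeasurableSpace (Vn 2)] [BorelSpace (Vn 2)]
    (u : Measure (Metric.sphere (0 : Vn 2) 1)) [IsProbabilityMeasure u]
    (hinv : ∀ U : Vn 2 ≃ₗᵢ[ℂ] Vn 2, Measure.map (sphereMap U) u = u)
    (p : ℝ)
    (E : Vn 2 →L[ℂ] Vn 2) (hE : IsEffect E) :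
    u {ψ : Metric.sphere (0 : Vn 2) 1 |
        max p (1 - p) < reliability p E (ψ : Vn 2)} ≤ 1 / 2 := by
  obtain ⟨l, hl, hlE⟩ := exists_norm_eq_one_mul_eq_neg_conj ⟪basisVec 2 0, E (basisVec 2 1)⟫_ℂ
  have hU : MeasurePreserving (sphereMap (swapPhase l hl)) u u :=
    ⟨(continuous_sphereMap _).measurable, hinv _⟩
  have hS : IsOpen {ψ : Metric.sphere (0 : Vn 2) 1 | max p (1 - p) < reliability p E ψ} :=
    isOpen_lt continuous_const ((continuous_reliability p E).comp continuous_subtype_val)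
  refine hU.measure_le_half_of_disjoint_preimage hS.measurableSet
    (Set.disjoint_left.2 fun ψ hψ hUψ => ?_)
  have hsum := reliability_swapPhase_add_le p hE hl hlE (norm_eq_of_mem_sphere ψ)
  have hUψ' : max p (1 - p) < reliability p E (swapPhase l hl ψ) := hUψ
  have hψ' : max p (1 - p) < reliability p E ψ := hψ
  linarith

/-- (Proposition 7.) Let `n = 2`, let `u` be the uniform (unitarily invariant Borel)
probability measure on the unit sphere of `ℂ²`, and let `p ∈ [0,1]` be arbitrary. Then
for every effect `E` on `ℂ²`, the set `S_E = {ψ : R_ψ(E) > max{p, 1-p}}` satisfies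
`u(S_E) ≤ 1/2`. -/
theorem stmt_16
    [MeasurableSpace (Vn 2)] [BorelSpace (Vn 2)]
    (u : Measure (Metric.sphere (0 : Vn 2) 1)) [IsProbabilityMeasure u]
    (hinv : ∀ U : Vn 2 ≃ₗᵢ[ℂ] Vn 2, Measure.map (sphereMap U) u = u)
    (p : ℝ) (hp : p ∈ Set.Icc (0 : ℝ) 1)
    (E : Vn 2 →L[ℂ] Vn 2) (hE : IsEffect E) :
    u {ψ : Metric.sphere (0 : Vn 2) 1 |
        max p (1 - p) < reliability p E (ψ : Vn 2)} ≤ 1 / 2 :=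
  stmt_16_general u hinv p E hE
end
end
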